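/- The map φ decomposes L(3,n) into saturated chains starting in S_{3,n} and ending in E_{3,n}, of two types: (i) for every integer k ≥ 0 with 4k ≤ n, the iterates φ^j((4k,2k,0)) for 0 ≤ j < 3(n−4k) all lie in L(3,n) \ E_{3,n}, and φ^{3(n−4k)}((4k,2k,0)) = (n, n−2k, n−4k) ∈ E_{3,n}; (ii) for all integers k ≥ 0 and ℓ ≥ 2 with 4k+ℓ ≤ n and 2(6k+ℓ) ≤ 3n, the iterates φ^j((4k+ℓ,2k,0)) for 0 ≤ j < 2(n−4k−1) all lie in L(3,n) \ E_{3,n}, and φ^{2(n−4k−1)}((4k+ℓ,2k,0)) = (n, n−2k, ℓ−2) ∈ E_{3,n}. -/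

import Mathlib

/-!
Unwinding the duality, `(a, b, c) ∈ E_{3,m}` is a system of linear conditions plus the parity
of `m - b`, so both orbits of `φ` have closed forms valid for any number of steps. From
`(4k, 2k, 0)`, `φ` raises the first, second and third coordinate in turn. From `(4k + ℓ, 2k, 0)`
it raises the second and third alternately up to `(4k + ℓ, 2k + ℓ, ℓ - 2)`, then the first and
second alternately. At each step the residue of the step index decides which branch of `φ`
applies, and the claims about the first `3(n - 4k)`, resp. `2(n - 4k - 1)`, points of the orbits
are linear arithmetic on the closed forms; `n` enters only through these lengths.
-/

/-- Membership in the poset `L(3,n)`: triples `(p₁,p₂,p₃)` with `n ≥ p₁ ≥ p₂ ≥ p₃ ≥ 0`. -/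
def L3 (n : ℤ) : Set (ℤ × ℤ × ℤ) :=
  {p | p.1 ≤ n ∧ p.2.1 ≤ p.1 ∧ p.2.2 ≤ p.2.1 ∧ 0 ≤ p.2.2}

/-- The starting set `S_{3,m}`. -/
def S3 (m : ℤ) : Set (ℤ × ℤ × ℤ) :=
  {p | ∃ k ℓ : ℤ, 0 ≤ k ∧ 0 ≤ ℓ ∧ ℓ ≠ 1 ∧ 4 * k + ℓ ≤ m ∧ 2 * (6 * k + ℓ) ≤ 3 * m ∧
    p = (4 * k + ℓ, 2 * k, 0)}

/-- The dual of a partition in `L(3,m)`. -/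
def dual (m : ℤ) (p : ℤ × ℤ × ℤ) : ℤ × ℤ × ℤ :=
  (m - p.2.2, m - p.2.1, m - p.1)

/-- The end set `E_{3,m} = {λ* : λ ∈ S_{3,m}}`. -/
def E3 (m : ℤ) : Set (ℤ × ℤ × ℤ) := dual m '' S3 m

open Classical in
/-- The order matching `φ`. -/
noncomputable def phi (p : ℤ × ℤ × ℤ) : ℤ × ℤ × ℤ :=
  if p ∈ E3 p.1 then
    (p.1 + 1, p.2.1, p.2.2)
  else if (Even (p.2.1 + p.2.2) ∧ (p.1 - 1, p.2.1 + 1, p.2.2) ∉ E3 (p.1 - 1)) ∨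
      (¬ Even (p.2.1 + p.2.2) ∧ (p.1 - 1, p.2.1, p.2.2 + 1) ∈ E3 (p.1 - 1)) then
    (p.1, p.2.1 + 1, p.2.2)
  else
    (p.1, p.2.1, p.2.2 + 1)

lemma mem_E3_iff (m a b c : ℤ) : (a, b, c) ∈ E3 m ↔
    a = m ∧ b ≤ m ∧ (m - b) % 2 = 0 ∧ 0 ≤ c ∧ m + c ≤ 2 * b ∧ 2 * b - m - c ≠ 1 ∧
      m ≤ 2 * (b + c) := by
  constructor
  · rintro ⟨q, ⟨k, ℓ, hk, hℓ, hℓ1, h4, h5, rfl⟩, h⟩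
    simp only [dual, Prod.ext_iff] at h
    omega
  · rintro ⟨rfl, hb, hpar, hc, hℓ, hℓ1, h6⟩
    -- `(a, b, c)` is the dual of `(4k + ℓ, 2k, 0)` with `k = (a - b) / 2` and `ℓ = 2b - a - c`.
    refine ⟨(4 * ((a - b) / 2) + (2 * b - a - c), 2 * ((a - b) / 2), 0),
      ⟨(a - b) / 2, 2 * b - a - c, by omega, by omega, by omega, by omega, by omega, rfl⟩, ?_⟩
    simp only [dual, Prod.ext_iff]
    omega

theorem iterate_eq_of_map_eq_succ {α : Type*} {f : α → α} {c : ℕ → α} {x : α} (h0 : c 0 = x)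
    (h : ∀ j, f (c j) = c (j + 1)) (j : ℕ) : f^[j] x = c j := by
  induction j with
  | zero => exact h0.symm
  | succ j ih => rw [Function.iterate_succ_apply', ih, h]

def chainI (k : ℤ) (j : ℕ) : ℤ × ℤ × ℤ :=
  (4 * k + (j + 2) / 3, 2 * k + (j + 1) / 3, j / 3)

def chainII (k l : ℤ) (j : ℕ) : ℤ × ℤ × ℤ :=
  if (j : ℤ) ≤ 2 * l - 3 then (4 * k + l, 2 * k + (j + 1) / 2, j / 2)
  else (4 * k + (j + 3) / 2, 2 * k + (j + 2) / 2, l - 2)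

lemma phi_chainI {k : ℤ} (hk : 0 ≤ k) (j : ℕ) : phi (chainI k j) = chainI k (j + 1) := by
  simp only [chainI, phi, mem_E3_iff, Int.even_iff, Nat.cast_add, Nat.cast_one, true_and]
  split_ifs <;> simp only [Prod.ext_iff] <;> omega

lemma phi_chainII {k l : ℤ} (hk : 0 ≤ k) (hl : 2 ≤ l) (j : ℕ) :
    phi (chainII k l j) = chainII k l (j + 1) := by
  simp only [chainII, Nat.cast_add, Nat.cast_one]
  split_ifs <;> simp only [phi, mem_E3_iff, Int.even_iff, true_and] <;> split_ifs <;>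
    simp only [Prod.ext_iff, true_and, and_true] <;> omega

lemma iterate_phi_eq_chainI {k : ℤ} (hk : 0 ≤ k) (j : ℕ) :
    phi^[j] (4 * k, 2 * k, 0) = chainI k j := by
  refine iterate_eq_of_map_eq_succ ?_ (phi_chainI hk) j
  simp [chainI]

lemma iterate_phi_eq_chainII {k l : ℤ} (hk : 0 ≤ k) (hl : 2 ≤ l) (j : ℕ) :
    phi^[j] (4 * k + l, 2 * k, 0) = chainII k l j := by
  refine iterate_eq_of_map_eq_succ ?_ (phi_chainII hk hl) j
  rw [chainII, if_pos (by omega)]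
  simp

theorem phi_chain_decomposition_general (n : ℤ) :
    (∀ k : ℤ, 0 ≤ k → 4 * k ≤ n →
      (∀ j : ℕ, (j : ℤ) < 3 * (n - 4 * k) →
        phi^[j] (4 * k, 2 * k, 0) ∈ L3 n \ E3 n) ∧
      phi^[(3 * (n - 4 * k)).toNat] (4 * k, 2 * k, 0) = (n, n - 2 * k, n - 4 * k) ∧
      ((n, n - 2 * k, n - 4 * k) : ℤ × ℤ × ℤ) ∈ E3 n) ∧
    (∀ k l : ℤ, 0 ≤ k → 2 ≤ l → 4 * k + l ≤ n → 2 * (6 * k + l) ≤ 3 * n →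
      (∀ j : ℕ, (j : ℤ) < 2 * (n - 4 * k - 1) →
        phi^[j] (4 * k + l, 2 * k, 0) ∈ L3 n \ E3 n) ∧
      phi^[(2 * (n - 4 * k - 1)).toNat] (4 * k + l, 2 * k, 0) = (n, n - 2 * k, l - 2) ∧
      ((n, n - 2 * k, l - 2) : ℤ × ℤ × ℤ) ∈ E3 n) := by
  refine ⟨fun k hk h4k => ⟨fun j hj => ?_, ?_, ?_⟩,
    fun k l hk hl hkl hkln => ⟨fun j hj => ?_, ?_, ?_⟩⟩
  · simp only [iterate_phi_eq_chainI hk, chainI, Set.mem_sdiff, L3, Set.mem_ofPred_eq, mem_E3_iff]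
    omega
  · simp only [iterate_phi_eq_chainI hk, chainI, Prod.ext_iff]
    omega
  · rw [mem_E3_iff]
    omega
  · simp only [iterate_phi_eq_chainII hk hl, chainII]
    split_ifs <;> simp only [Set.mem_sdiff, L3, Set.mem_ofPred_eq, mem_E3_iff] <;> omega
  · simp only [iterate_phi_eq_chainII hk hl, chainII]
    split_ifs <;> simp only [Prod.ext_iff, and_true] <;> omega
  · rw [mem_E3_iff]
    omega

/-- `φ` decomposes `L(3,n)` into saturated chains, of two types:
(i) for `k ≥ 0` with `4k ≤ n`, the chain starting at `(4k, 2k, 0)` stays in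
`L(3,n) \ E_{3,n}` for `3(n-4k)` steps and ends at `(n, n-2k, n-4k) ∈ E_{3,n}`;
(ii) for `k ≥ 0`, `ℓ ≥ 2` with `4k+ℓ ≤ n` and `2(6k+ℓ) ≤ 3n`, the chain starting at
`(4k+ℓ, 2k, 0)` stays in `L(3,n) \ E_{3,n}` for `2(n-4k-1)` steps and ends at
`(n, n-2k, ℓ-2) ∈ E_{3,n}`. -/
theorem phi_chain_decomposition (n : ℤ) (hn : 0 < n) :
    (∀ k : ℤ, 0 ≤ k → 4 * k ≤ n →
      (∀ j : ℕ, (j : ℤ) < 3 * (n - 4 * k) →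
        phi^[j] (4 * k, 2 * k, 0) ∈ L3 n \ E3 n) ∧
      phi^[(3 * (n - 4 * k)).toNat] (4 * k, 2 * k, 0) = (n, n - 2 * k, n - 4 * k) ∧
      ((n, n - 2 * k, n - 4 * k) : ℤ × ℤ × ℤ) ∈ E3 n) ∧
    (∀ k l : ℤ, 0 ≤ k → 2 ≤ l → 4 * k + l ≤ n → 2 * (6 * k + l) ≤ 3 * n →
      (∀ j : ℕ, (j : ℤ) < 2 * (n - 4 * k - 1) →
        phi^[j] (4 * k + l, 2 * k, 0) ∈ L3 n \ E3 n) ∧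
      phi^[(2 * (n - 4 * k - 1)).toNat] (4 * k + l, 2 * k, 0) = (n, n - 2 * k, l - 2) ∧
      ((n, n - 2 * k, l - 2) : ℤ × ℤ × ℤ) ∈ E3 n) :=
  phi_chain_decomposition_general n
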